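/- Let x be a non-uniform lattice of either class and δ ∈ ℝ. Then for every z ∈ ℂ at which the occurring denominators are nonzero, σ*(z) + ½·τ*_δ(z)·Δx_{δ−1}(z) = σ(z+1) + ½·τ_{δ−2}(z+1)·Δx_{δ−1}(z) = σ̃_{δ−2}(z+1); moreover there exist constants A, B, C ∈ ℂ such that σ(z+1) + ½·τ_{δ−2}(z+1)·Δx_{δ−1}(z) = A·x_δ(z)² + B·x_δ(z) + C at all such z. Hence the adjoint difference equation is again a difference equation of hypergeometric type on the non-uniform lattice. (Theorem 3.1, with δ = ν−μ) -/

import Mathlib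

noncomputable section

open Finset

/-- `x` is a non-uniform lattice of one of the two classes (q-quadratic with
`q = e^w`, or quadratic), together with its associated functions `α = a` and
`γ = g`. -/
def IsNonUniformLattice (w : ℂ) (x : ℂ → ℂ) (a g : ℝ → ℂ) : Prop :=
  (Complex.exp w ≠ 1 ∧
    ∃ c1 c2 c3 : ℂ, c1 * c2 ≠ 0 ∧
      (∀ s : ℂ, x s = c1 * Complex.exp (s * w) + c2 * Complex.exp (-(s * w)) + c3) ∧
      (∀ μ : ℝ, a μ =
        (Complex.exp ((μ : ℂ) / 2 * w) + Complex.exp (-((μ : ℂ) / 2 * w))) / 2) ∧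
      (∀ μ : ℝ, g μ =
        (Complex.exp ((μ : ℂ) / 2 * w) - Complex.exp (-((μ : ℂ) / 2 * w))) /
          (Complex.exp ((1 : ℂ) / 2 * w) - Complex.exp (-((1 : ℂ) / 2 * w))))) ∨
  (∃ c1 c2 c3 : ℂ, c1 ≠ 0 ∧
    (∀ s : ℂ, x s = c1 * s ^ 2 + c2 * s + c3) ∧
    (∀ μ : ℝ, a μ = 1) ∧ (∀ μ : ℝ, g μ = (μ : ℂ)))

/-- `xl x ν s = x_ν(s) = x (s + ν/2)`. -/
def xl (x : ℂ → ℂ) (ν : ℝ) (s : ℂ) : ℂ := x (s + (ν : ℂ) / 2)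

/-- `σ(z) = σ̃(x z) - (1/2)·τ̃(x z)·∇x₁(z)`. -/
def sig (x : ℂ → ℂ) (st tt : Polynomial ℂ) (z : ℂ) : ℂ :=
  st.eval (x z) - (1 / 2) * tt.eval (x z) * (xl x 1 z - xl x 1 (z - 1))

/-- `κ_ν = α(ν-1)·τ̃' + (1/2)·γ(ν-1)·σ̃''`. -/
def kap (a g : ℝ → ℂ) (st tt : Polynomial ℂ) (ν : ℝ) : ℂ :=
  a (ν - 1) * tt.coeff 1 + (1 / 2) * g (ν - 1) * (2 * st.coeff 2)

/-- Backward difference quotient `∇_ν f (z) = ∇f(z)/∇x_ν(z)`. -/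
def nab (x : ℂ → ℂ) (ν : ℝ) (f : ℂ → ℂ) (z : ℂ) : ℂ :=
  (f z - f (z - 1)) / (xl x ν z - xl x ν (z - 1))

/-- Forward difference quotient `Δ_ν f (z) = Δf(z)/Δx_ν(z)`. -/
def del (x : ℂ → ℂ) (ν : ℝ) (f : ℂ → ℂ) (z : ℂ) : ℂ :=
  (f (z + 1) - f z) / (xl x ν (z + 1) - xl x ν z)

/-- Generalized power `[x_α(s) - x_α(z)]^{(m)} = ∏_{k=0}^{m-1} (x_α(s) - x_α(z-k))`. -/
def gp (x : ℂ → ℂ) (m : ℕ) (al : ℝ) (s z : ℂ) : ℂ :=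
  ∏ k ∈ Finset.range m, (xl x al s - xl x al (z - (k : ℂ)))

/-- The defining relation for the family `τ_ν = T ν`:
`τ_ν(z)·∇x_{ν+1}(z) = σ(z+ν) - σ(z) + τ(z+ν)·∇x₁(z+ν)`. -/
def TauFamily (x : ℂ → ℂ) (st tt : Polynomial ℂ) (T : ℝ → ℂ → ℂ) : Prop :=
  ∀ (ν : ℝ) (z : ℂ),
    T ν z * (xl x (ν + 1) z - xl x (ν + 1) (z - 1)) =
      sig x st tt (z + (ν : ℂ)) - sig x st tt z +
        tt.eval (x (z + (ν : ℂ))) * (xl x 1 (z + (ν : ℂ)) - xl x 1 (z + (ν : ℂ) - 1))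

/-- Adjoint data: `σ*(z) = σ(z-1) + τ_δ(z-1)·∇x_{δ-1}(z)`. -/
def sigStar (x : ℂ → ℂ) (st tt : Polynomial ℂ) (T : ℝ → ℂ → ℂ) (δ : ℝ) (z : ℂ) : ℂ :=
  sig x st tt (z - 1) + T δ (z - 1) * (xl x (δ - 1) z - xl x (δ - 1) (z - 1))

/-- Adjoint data: `τ*_δ(z) = (σ(z+1) - σ(z-1) - τ_δ(z-1)·∇x_{δ-1}(z)) / Δx_{δ-1}(z)`. -/
def tauStar (x : ℂ → ℂ) (st tt : Polynomial ℂ) (T : ℝ → ℂ → ℂ) (δ : ℝ) (z : ℂ) : ℂ :=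
  (sig x st tt (z + 1) - sig x st tt (z - 1) -
      T δ (z - 1) * (xl x (δ - 1) z - xl x (δ - 1) (z - 1))) /
    (xl x (δ - 1) (z + 1) - xl x (δ - 1) z)

/-!
On either lattice the symmetric sums `x(u+a) + x(u-a)` and `x(u+a)x(u+b) + x(u-a)x(u-b)` are
polynomials of degree at most 2 in `x(u)`. Put `u = z + δ/2` and `h = δ/2 - 1`. The defining
relation of `τ_ν`, read as `σ(z) + τ_ν(z)∇x_{ν+1}(z) = σ(z+ν) + τ(z+ν)∇x₁(z+ν)`, shows that both
`σ*(z)` (take `ν = δ` at `z - 1`) and `σ(z+1) + τ_{δ-2}(z+1)Δx_{δ-1}(z)` (take `ν = δ - 2` at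
`z + 1`) equal `σ(u+h) + τ(u+h)∇x₁(u+h)`; this gives the first identity. It also turns the second
expression into `½(σ(u-h) + σ(u+h) + τ(u+h)∇x₁(u+h))`, and since `σ = σ̃ ∘ x - ½ τ∇x₁` with
`deg σ̃ ≤ 2`, `deg τ̃ ≤ 1`, this is a linear combination of symmetric sums.
-/

open Polynomial

theorem Polynomial.eval_eq_of_degree_le_two {R : Type*} [CommRing R] {p : R[X]}
    (hp : p.degree ≤ 2) (y : R) : p.eval y = p.coeff 0 + p.coeff 1 * y + p.coeff 2 * y ^ 2 := by
  have hlt : p.natDegree < 3 := Nat.lt_succ_of_le (natDegree_le_iff_degree_le.mpr hp)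
  rw [eval_eq_sum_range' hlt]
  simp [Finset.sum_range_succ]

theorem Polynomial.eval_eq_of_degree_le_one {R : Type*} [CommRing R] {p : R[X]}
    (hp : p.degree ≤ 1) (y : R) : p.eval y = p.coeff 0 + p.coeff 1 * y := by
  have hlt : p.natDegree < 2 := Nat.lt_succ_of_le (natDegree_le_iff_degree_le.mpr hp)
  rw [eval_eq_sum_range' hlt]
  simp [Finset.sum_range_succ]

section QuadraticsIn

variable {α G R : Type*} [CommRing R]

def quadraticsIn (x : α → R) : Submodule R (α → R) where
  carrier := {f | ∃ A B C : R, ∀ u, f u = A * x u ^ 2 + B * x u + C}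
  zero_mem' := ⟨0, 0, 0, fun u => by simp⟩
  add_mem' := by
    rintro f g ⟨A, B, C, hf⟩ ⟨A', B', C', hg⟩
    exact ⟨A + A', B + B', C + C', fun u => by simp only [Pi.add_apply, hf, hg]; ring⟩
  smul_mem' := by
    rintro c f ⟨A, B, C, hf⟩
    exact ⟨c * A, c * B, c * C, fun u => by simp only [Pi.smul_apply, smul_eq_mul, hf]; ring⟩

theorem one_mem_quadraticsIn (x : α → R) : (1 : α → R) ∈ quadraticsIn x :=
  ⟨0, 0, 1, fun u => by simp⟩

def HasQuadraticSymmetricSums [AddCommGroup G] (x : G → R) : Prop :=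
  (∀ a, (fun u => x (u + a) + x (u - a)) ∈ quadraticsIn x) ∧
    ∀ a b, (fun u => x (u + a) * x (u + b) + x (u - a) * x (u - b)) ∈ quadraticsIn x

theorem HasQuadraticSymmetricSums.eval_add_eval_mem [AddCommGroup G] {x : G → R}
    (hx : HasQuadraticSymmetricSums x) {p : R[X]} (hp : p.degree ≤ 2) (h : G) :
    (fun u => p.eval (x (u - h)) + p.eval (x (u + h))) ∈ quadraticsIn x := by
  have hsum : (fun u => p.eval (x (u - h)) + p.eval (x (u + h))) =
      (2 * p.coeff 0) • (1 : G → R) + p.coeff 1 • (fun u => x (u + h) + x (u - h)) +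
        p.coeff 2 • (fun u => x (u + h) * x (u + h) + x (u - h) * x (u - h)) := by
    funext u
    simp only [Pi.add_apply, Pi.smul_apply, Pi.one_apply, smul_eq_mul,
      eval_eq_of_degree_le_two hp]
    ring
  rw [hsum]
  exact add_mem (add_mem (Submodule.smul_mem _ _ (one_mem_quadraticsIn x))
    (Submodule.smul_mem _ _ (hx.1 h))) (Submodule.smul_mem _ _ (hx.2 h h))

end QuadraticsIn

theorem hasQuadraticSymmetricSums_of_quadratic {R : Type*} [CommRing R] {x : R → R}
    {c₁ c₂ c₃ : R} (hx : ∀ s, x s = c₁ * s ^ 2 + c₂ * s + c₃) : HasQuadraticSymmetricSums x := by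
  -- `x(u ± a) = x(u) ± a x'(u) + c₁a²` and `x'(u)² = 4c₁(x(u) - c₃) + c₂²`
  refine ⟨fun a => ⟨0, 2, 2 * c₁ * a ^ 2, fun u => ?_⟩,
    fun a b => ⟨2, 2 * c₁ * (a ^ 2 + b ^ 2) + 8 * c₁ * a * b,
      2 * c₁ ^ 2 * a ^ 2 * b ^ 2 + 2 * a * b * (c₂ ^ 2 - 4 * c₁ * c₃), fun u => ?_⟩⟩ <;>
  · simp only [hx]
    ring

theorem hasQuadraticSymmetricSums_of_exp {x : ℂ → ℂ} {w c₁ c₂ c₃ : ℂ}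
    (hx : ∀ s, x s = c₁ * Complex.exp (s * w) + c₂ * Complex.exp (-(s * w)) + c₃) :
    HasQuadraticSymmetricSums x := by
  set E : ℂ → ℂ := fun s => Complex.exp (s * w)
  have hE : ∀ s, E s ≠ 0 := fun s => Complex.exp_ne_zero _
  have hx' : ∀ s, x s = c₁ * E s + c₂ * (E s)⁻¹ + c₃ := fun s => by
    rw [hx, Complex.exp_neg]
  have hadd : ∀ u a, E (u + a) = E u * E a := fun u a => by
    simp only [E, add_mul, Complex.exp_add]
  have hsub : ∀ u a, E (u - a) = E u / E a := fun u a => by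
    simp only [E, sub_mul, Complex.exp_sub]
  refine ⟨fun a => ⟨0, E a + (E a)⁻¹, c₃ * (2 - (E a + (E a)⁻¹)), fun u => ?_⟩, fun a b => ?_⟩
  · simp only [hx', hadd, hsub]
    field_simp [hE]
    ring
  -- expand in `X = c₁E(u)`, `Y = c₂E(u)⁻¹`, using `XY = c₁c₂` and `X + Y = x(u) - c₃`
  · set k := E a * E b + (E a * E b)⁻¹
    set m := E a + (E a)⁻¹ + E b + (E b)⁻¹
    set n := E a / E b + E b / E a
    refine ⟨k, c₃ * (m - 2 * k), c₃ ^ 2 * (k - m + 2) + 2 * c₁ * c₂ * (n - k), fun u => ?_⟩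
    simp only [hx', hadd, hsub, k, m, n]
    field_simp [hE]
    ring

theorem IsNonUniformLattice.hasQuadraticSymmetricSums {w : ℂ} {x : ℂ → ℂ} {a g : ℝ → ℂ}
    (hlat : IsNonUniformLattice w x a g) : HasQuadraticSymmetricSums x := by
  obtain ⟨-, c₁, c₂, c₃, -, hx, -⟩ | ⟨c₁, c₂, c₃, -, hx, -⟩ := hlat
  · exact hasQuadraticSymmetricSums_of_exp hx
  · exact hasQuadraticSymmetricSums_of_quadratic hx

def tauNabla (x : ℂ → ℂ) (tt : ℂ[X]) (s : ℂ) : ℂ :=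
  tt.eval (x s) * (xl x 1 s - xl x 1 (s - 1))

theorem sig_eq (x : ℂ → ℂ) (st tt : ℂ[X]) (s : ℂ) :
    sig x st tt s = st.eval (x s) - 1 / 2 * tauNabla x tt s := by
  rw [sig, tauNabla]
  ring

theorem HasQuadraticSymmetricSums.tauNabla_sub_tauNabla_mem {x : ℂ → ℂ}
    (hx : HasQuadraticSymmetricSums x) {tt : ℂ[X]} (htt : tt.degree ≤ 1) (h : ℂ) :
    (fun u => tauNabla x tt (u + h) - tauNabla x tt (u - h)) ∈ quadraticsIn x := by
  have hdiff : (fun u => tauNabla x tt (u + h) - tauNabla x tt (u - h)) =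
      tt.coeff 0 • ((fun u => x (u + (h + 1 / 2)) + x (u - (h + 1 / 2))) -
          (fun u => x (u + (h - 1 / 2)) + x (u - (h - 1 / 2)))) +
        tt.coeff 1 • ((fun u => x (u + h) * x (u + (h + 1 / 2)) + x (u - h) * x (u - (h + 1 / 2))) -
          (fun u => x (u + h) * x (u + (h - 1 / 2)) + x (u - h) * x (u - (h - 1 / 2)))) := by
    funext u
    simp only [tauNabla, xl, eval_eq_of_degree_le_one htt, Pi.add_apply, Pi.sub_apply,
      Pi.smul_apply, smul_eq_mul]
    push_cast
    ring_nf
  rw [hdiff]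
  exact add_mem (Submodule.smul_mem _ _ (sub_mem (hx.1 _) (hx.1 _)))
    (Submodule.smul_mem _ _ (sub_mem (hx.2 _ _) (hx.2 _ _)))

theorem HasQuadraticSymmetricSums.sig_add_sig_add_tauNabla_mem {x : ℂ → ℂ}
    (hx : HasQuadraticSymmetricSums x) {st tt : ℂ[X]} (hst : st.degree ≤ 2)
    (htt : tt.degree ≤ 1) (h : ℂ) :
    (fun u => sig x st tt (u - h) + sig x st tt (u + h) + tauNabla x tt (u + h)) ∈
      quadraticsIn x := by
  have hsum : (fun u => sig x st tt (u - h) + sig x st tt (u + h) + tauNabla x tt (u + h)) =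
      (fun u => st.eval (x (u - h)) + st.eval (x (u + h))) +
        (1 / 2 : ℂ) • (fun u => tauNabla x tt (u + h) - tauNabla x tt (u - h)) := by
    funext u
    simp only [sig_eq, Pi.add_apply, Pi.smul_apply, smul_eq_mul]
    ring
  rw [hsum]
  exact add_mem (hx.eval_add_eval_mem hst h)
    (Submodule.smul_mem _ _ (hx.tauNabla_sub_tauNabla_mem htt h))

namespace TauFamily

variable {x : ℂ → ℂ} {st tt : ℂ[X]} {T : ℝ → ℂ → ℂ}

theorem sig_add_mul_nabla (hT : TauFamily x st tt T) (ν : ℝ) (z : ℂ) :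
    sig x st tt z + T ν z * (xl x (ν + 1) z - xl x (ν + 1) (z - 1)) =
      sig x st tt (z + ν) + tauNabla x tt (z + ν) := by
  rw [hT ν z, tauNabla]
  ring

theorem sigStar_eq (hT : TauFamily x st tt T) (δ : ℝ) (z : ℂ) :
    sigStar x st tt T δ z = sig x st tt (z + δ - 1) + tauNabla x tt (z + δ - 1) := by
  have h := hT.sig_add_mul_nabla δ (z - 1)
  rw [sigStar]
  simp only [xl] at h ⊢
  push_cast at h ⊢
  ring_nf at h ⊢
  exact h

theorem sig_add_one_add_mul_delta (hT : TauFamily x st tt T) (δ : ℝ) (z : ℂ) :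
    sig x st tt (z + 1) + T (δ - 2) (z + 1) * (xl x (δ - 1) (z + 1) - xl x (δ - 1) z) =
      sig x st tt (z + δ - 1) + tauNabla x tt (z + δ - 1) := by
  have h := hT.sig_add_mul_nabla (δ - 2) (z + 1)
  simp only [xl] at h ⊢
  push_cast at h ⊢
  ring_nf at h ⊢
  exact h

end TauFamily

/-- Theorem 3.1 (with `δ = ν - μ`): the adjoint equation is again of
hypergeometric type. -/
theorem thm3_1
    (w : ℂ) (x : ℂ → ℂ) (a g : ℝ → ℂ)
    (hlat : IsNonUniformLattice w x a g)
    (st tt : Polynomial ℂ) (hst : st.degree ≤ 2) (htt : tt.degree ≤ 1)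
    (T : ℝ → ℂ → ℂ) (hT : TauFamily x st tt T) (δ : ℝ) :
    ∃ A B C : ℂ, ∀ z : ℂ,
      xl x (δ - 1) (z + 1) - xl x (δ - 1) z ≠ 0 →
      (sigStar x st tt T δ z + (1 / 2) * tauStar x st tt T δ z *
          (xl x (δ - 1) (z + 1) - xl x (δ - 1) z) =
        sig x st tt (z + 1) + (1 / 2) * T (δ - 2) (z + 1) *
          (xl x (δ - 1) (z + 1) - xl x (δ - 1) z)) ∧
      (sig x st tt (z + 1) + (1 / 2) * T (δ - 2) (z + 1) *
          (xl x (δ - 1) (z + 1) - xl x (δ - 1) z) =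
        A * xl x δ z ^ 2 + B * xl x δ z + C) := by
  obtain ⟨A, B, C, hsym⟩ := hlat.hasQuadraticSymmetricSums.sig_add_sig_add_tauNabla_mem hst htt
    ((δ : ℂ) / 2 - 1)
  refine ⟨A / 2, B / 2, C / 2, fun z hz => ⟨?_, ?_⟩⟩
  · have htauStar : tauStar x st tt T δ z * (xl x (δ - 1) (z + 1) - xl x (δ - 1) z) =
        sig x st tt (z + 1) - sigStar x st tt T δ z := by
      rw [tauStar, div_mul_cancel₀ _ hz, sigStar]
      ring
    linear_combination htauStar / 2 + hT.sigStar_eq δ z / 2 -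
      hT.sig_add_one_add_mul_delta δ z / 2
  · have hu := hsym (z + δ / 2)
    beta_reduce at hu
    rw [show x (z + δ / 2) = xl x δ z from rfl, show z + δ / 2 - (δ / 2 - 1) = z + 1 by ring,
      show z + δ / 2 + (δ / 2 - 1) = z + δ - 1 by ring] at hu
    linear_combination hT.sig_add_one_add_mul_delta δ z / 2 + hu / 2
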